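/- For the symmetric group 𝔖₄ acting on ℂ³ as the symmetry group of the regular tetrahedron, the map ω(u,v,w) = (u²+v²+w², (u+v)(u−v)w, (2u²−w²)(2v²−w²)) is invariant under the generating reflections: ω((1 2)·(u,v,w)) = ω(u,v,w) and ω((3 4)·(u,v,w)) = ω(u,v,w) and ω((2 3)·(u,v,w)) = ω(u,v,w), where (1 2) = diag(−1,1,1), (3 4) = diag(1,−1,1), and (2 3) = (1/2)·[[1,−1,−√2],[−1,1,−√2],[−√2,−√2,0]]. -/
import Mathlib


noncomputable def tetrahedralOrbitMap (u v w : ℂ) : ℂ × ℂ × ℂ :=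
  (u ^ 2 + v ^ 2 + w ^ 2, (u + v) * (u - v) * w, (2 * u ^ 2 - w ^ 2) * (2 * v ^ 2 - w ^ 2))

theorem tetrahedral_orbit_map_invariant (u v w : ℂ) :
    tetrahedralOrbitMap (-u) v w = tetrahedralOrbitMap u v w ∧
    tetrahedralOrbitMap u (-v) w = tetrahedralOrbitMap u v w ∧
    tetrahedralOrbitMap ((u - v - (Real.sqrt 2 : ℂ) * w) / 2)
      ((-u + v - (Real.sqrt 2 : ℂ) * w) / 2)
      ((-(Real.sqrt 2 : ℂ) * u - (Real.sqrt 2 : ℂ) * v) / 2)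
      = tetrahedralOrbitMap u v w := by
  have hs : ((Real.sqrt 2 : ℝ) : ℂ) ^ 2 = 2 := by
    norm_cast
    rw [Real.sq_sqrt] <;> norm_num
  set s : ℂ := ((Real.sqrt 2 : ℝ) : ℂ) with hsdef
  simp only [tetrahedralOrbitMap, Prod.mk.injEq]
  refine ⟨⟨by ring, by ring, by ring⟩, ⟨by ring, by ring, by ring⟩, ?_, ?_, ?_⟩
  · linear_combination (w ^ 2 / 2 + v ^ 2 / 4 + u * v / 2 + u ^ 2 / 4) * hs
  · linear_combination (u ^ 2 * w / 2 - v ^ 2 * w / 2) * hs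
  · linear_combination (w ^ 4 / 2 + w ^ 4 * s ^ 2 / 4 - v ^ 2 * w ^ 2 - v ^ 2 * w ^ 2 * s ^ 2 / 4
      - v ^ 4 / 8 + v ^ 4 * s ^ 2 / 16 - u * v * w ^ 2 * s ^ 2 / 2 + u * v ^ 3 / 2
      + u * v ^ 3 * s ^ 2 / 4 - u ^ 2 * w ^ 2 - u ^ 2 * w ^ 2 * s ^ 2 / 4
      + 5 * u ^ 2 * v ^ 2 / 4 + 3 * u ^ 2 * v ^ 2 * s ^ 2 / 8 + u ^ 3 * v / 2
      + u ^ 3 * v * s ^ 2 / 4 - u ^ 4 / 8 + u ^ 4 * s ^ 2 / 16) * hs
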